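/- arXiv:2410.23224 — 2 statements merged into one kernel-verified Lean document; each statement's English description precedes it below -/
import Mathlib

section
/- Let Γ be a countable group and let P be a G_δ subset of Sub_[∞](Γ). Then HT(Γ) ∩ P is dense in P if and only if the following condition (*) holds: for every Λ ∈ P, every d ≥ 1, every g_1,…,g_{2d} ∈ Γ such that the cosets Λg_1,…,Λg_{2d} are pairwise distinct (i.e. g_i g_j^{-1} ∉ Λ for all i ≠ j), and every neighborhood V of Λ in Sub(Γ), there exist Λ' ∈ P ∩ V and γ ∈ Γ such that g_i γ g_{i+d}^{-1} ∈ Λ' for all i ∈ {1,…,d}. -/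
/-- The Chabauty topology on the space of subgroups of `Γ`: the topology induced by the
injection `Sub(Γ) → {0,1}^Γ` (indicator functions), where `{0,1}^Γ` carries the product
of the discrete topologies. -/
instance chabauty (Γ : Type*) [Group Γ] : TopologicalSpace (Subgroup Γ) :=
  TopologicalSpace.induced (fun (H : Subgroup Γ) (g : Γ) => g ∈ H)
    (@Pi.topologicalSpace Γ (fun _ => Prop) (fun _ => ⊥))

/-- The space of right cosets `Λ\Γ`. -/
def rQuot {Γ : Type*} [Group Γ] (Λ : Subgroup Γ) : Type _ :=
  Quotient (QuotientGroup.rightRel Λ)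

/-- The right-translation action of `Γ` on the right coset space `Λ\Γ`:
`Λx · γ = Λxγ`. -/
def rAct {Γ : Type*} [Group Γ] (Λ : Subgroup Γ) (γ : Γ) : rQuot Λ → rQuot Λ :=
  Quotient.map' (fun x => x * γ) (by
    intro x y h
    rw [QuotientGroup.rightRel_apply] at h ⊢
    have key : y * γ * (x * γ)⁻¹ = y * x⁻¹ := by group
    rw [key]; exact h)

/-- The right-translation action of `Γ` on `Λ\Γ` is highly transitive: for every `d ≥ 1`,
any `d`-tuple of pairwise distinct cosets can be mapped to any other by some `γ ∈ Γ`. -/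
def HTcoset {Γ : Type*} [Group Γ] (Λ : Subgroup Γ) : Prop :=
  ∀ d : ℕ, 1 ≤ d → ∀ x y : Fin d → rQuot Λ,
    Function.Injective x → Function.Injective y →
    ∃ γ : Γ, ∀ i, rAct Λ γ (x i) = y i

/-- `HT(Γ)`: the set of infinite index subgroups `Λ ≤ Γ` whose right-translation action
on `Λ\Γ` is highly transitive. -/
def HTset (Γ : Type*) [Group Γ] : Set (Subgroup Γ) :=
  {Λ | Infinite (rQuot Λ) ∧ HTcoset Λ}

/-!
Write `U(g, h)` for the set of subgroups `Λ` such that, if the cosets `Λgᵢ, Λhⱼ` are pairwise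
distinct, some `γ` maps each `Λgᵢ` to `Λhᵢ`. These sets are open in the Chabauty topology, and
condition (*) says exactly that each of them is dense in `P`. As a closed subspace of the Cantor
space `{0,1}^Γ`, `Sub(Γ)` is compact, so its `Gδ` subset `P` is a Baire space and the countable
intersection of the `U(g, h)` is dense in `P`. An infinite-index subgroup in this intersection is
highly transitive: to map distinct cosets `x` to distinct cosets `y`, pass through a tuple of
cosets disjoint from both. Conversely, the subgroups for which given cosets are distinct form an
open set, so density of `HT(Γ) ∩ P` provides the required `Λ'` and `γ`.
-/

open Set Topology

theorem Set.Finite.exists_injective_disjoint_range {X : Type*} [Infinite X] {s : Set X}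
    (hs : s.Finite) (d : ℕ) : ∃ z : Fin d → X, Function.Injective z ∧ Disjoint (range z) s := by
  let e := hs.infinite_compl.natEmbedding
  refine ⟨fun i => e i, fun i j hij => Fin.val_injective (e.injective (Subtype.ext hij)), ?_⟩
  exact disjoint_left.2 fun _ ⟨i, hi⟩ => hi ▸ (e i).2

theorem infinite_iff_forall_exists_injective_fin {X : Type*} :
    Infinite X ↔ ∀ n, ∃ x : Fin n → X, Function.Injective x := by
  refine ⟨fun _ n => (finite_empty.exists_injective_disjoint_range n).imp fun _ h => h.1,
    fun H => ?_⟩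
  by_contra hfin
  rw [not_infinite_iff_finite] at hfin
  obtain ⟨x, hx⟩ := H (Nat.card X + 1)
  simpa using Nat.card_le_card_of_injective x hx

theorem induced_bot_of_injective {α β : Type*} {f : α → β} (hf : Function.Injective f) :
    TopologicalSpace.induced f (⊥ : TopologicalSpace β) = ⊥ :=
  eq_bot_of_singletons_open fun a => ⟨f '' {a}, trivial, hf.preimage_image _⟩

theorem IsGδ.subset_closure_iInter_inter {X ι : Type*} [TopologicalSpace X] [R1Space X]
    [LocallyCompactSpace X] [Countable ι] {P : Set X} (hP : IsGδ P) {U : ι → Set X}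
    (hU : ∀ i, IsOpen (U i)) (hdense : ∀ i, P ⊆ closure (U i ∩ P)) :
    P ⊆ closure ((⋂ i, U i) ∩ P) := by
  have := hP.baireSpace_of_t2Space_locallyCompactSpace
  have hdense' : ∀ i, Dense ((↑) ⁻¹' U i : Set P) := fun i => by
    rw [Subtype.dense_iff, Subtype.image_preimage_coe, inter_comm]
    exact hdense i
  have := dense_iInter_of_isOpen (fun i => (hU i).preimage continuous_subtype_val) hdense'
  rwa [← preimage_iInter, Subtype.dense_iff, Subtype.image_preimage_coe, inter_comm] at this

namespace Chabauty

variable {Γ : Type*} [Group Γ]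

/- `chabauty` puts the discrete topology on `Prop`, whereas Mathlib's instance on `Prop` is
Sierpiński's; we therefore work in `Γ → Bool`. -/
noncomputable def indicator (Λ : Subgroup Γ) (g : Γ) : Bool :=
  @decide (g ∈ Λ) (Classical.propDecidable _)

theorem indicator_eq_true {Λ : Subgroup Γ} {g : Γ} : indicator Λ g = true ↔ g ∈ Λ := by
  simp [indicator]

theorem isInducing_indicator : IsInducing (indicator (Γ := Γ)) := by
  refine ⟨?_⟩
  simp only [chabauty, Pi.topologicalSpace, induced_iInf, induced_compose,
    DiscreteTopology.eq_bot (α := Bool)]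
  refine iInf_congr fun g => ?_
  have hdecide : Function.Injective fun p : Prop => @decide p (Classical.propDecidable p) :=
    fun p q h => propext (by simpa using h)
  rw [← induced_bot_of_injective hdecide, induced_compose]
  rfl

theorem indicator_injective : Function.Injective (indicator (Γ := Γ)) := fun Λ Λ' h => by
  ext g
  rw [← indicator_eq_true, ← indicator_eq_true, h]

theorem range_indicator : range (indicator (Γ := Γ)) =
    {b | b 1 = true} ∩ ⋂ (x) (y), {b | b x = true → b y = true → b (x * y⁻¹) = true} := by
  ext b
  simp only [mem_range, mem_inter_iff, mem_iInter, mem_ofPred_eq]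
  constructor
  · rintro ⟨Λ, rfl⟩
    simp only [indicator_eq_true]
    exact ⟨Λ.one_mem, fun x y hx hy => Λ.mul_mem hx (Λ.inv_mem hy)⟩
  · rintro ⟨h1, hdiv⟩
    refine ⟨Subgroup.ofDiv {g | b g = true} ⟨1, h1⟩ fun x hx y hy => hdiv x y hx hy, ?_⟩
    funext g
    rw [Bool.eq_iff_iff, indicator_eq_true]
    rfl

theorem isClosed_range_indicator : IsClosed (range (indicator (Γ := Γ))) := by
  rw [range_indicator]
  refine (isClosed_eq (continuous_apply 1) continuous_const).inter
    (isClosed_iInter fun x => isClosed_iInter fun y => ?_)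
  let S : Set (Bool × Bool × Bool) := {t | t.1 = true → t.2.1 = true → t.2.2 = true}
  exact (isClosed_discrete S).preimage (f := fun b : Γ → Bool => (b x, b y, b (x * y⁻¹)))
    (by fun_prop)

theorem isClosedEmbedding_indicator : IsClosedEmbedding (indicator (Γ := Γ)) :=
  ⟨⟨isInducing_indicator, indicator_injective⟩, isClosed_range_indicator⟩

instance : CompactSpace (Subgroup Γ) := isClosedEmbedding_indicator.compactSpace

instance : T2Space (Subgroup Γ) := isClosedEmbedding_indicator.isEmbedding.t2Space

theorem isClopen_setOf_mem (x : Γ) : IsClopen {Λ : Subgroup Γ | x ∈ Λ} := by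
  have : {Λ : Subgroup Γ | x ∈ Λ} = (fun Λ => indicator Λ x) ⁻¹' {true} := by
    ext Λ
    exact indicator_eq_true.symm
  rw [this]
  exact (isClopen_discrete _).preimage ((continuous_apply x).comp isInducing_indicator.continuous)

end Chabauty

namespace rQuot

variable {Γ : Type*} [Group Γ] {Λ : Subgroup Γ}

def mk (Λ : Subgroup Γ) (x : Γ) : rQuot Λ :=
  @Quotient.mk'' Γ (QuotientGroup.rightRel Λ) x

theorem mk_surjective : Function.Surjective (mk Λ) :=
  @Quotient.mk''_surjective Γ (QuotientGroup.rightRel Λ)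

theorem mk_eq_mk_iff {x y : Γ} : mk Λ x = mk Λ y ↔ x * y⁻¹ ∈ Λ := by
  refine Quotient.eq''.trans (QuotientGroup.rightRel_apply.trans ?_)
  rw [← Λ.inv_mem_iff, mul_inv_rev, inv_inv]

theorem rAct_mk (γ x : Γ) : rAct Λ γ (mk Λ x) = mk Λ (x * γ) := rfl

theorem rAct_mk_eq_mk_iff {γ x y : Γ} : rAct Λ γ (mk Λ x) = mk Λ y ↔ x * γ * y⁻¹ ∈ Λ := by
  rw [rAct_mk, mk_eq_mk_iff]

theorem rAct_mul (γ δ : Γ) (q : rQuot Λ) : rAct Λ (γ * δ) q = rAct Λ δ (rAct Λ γ q) := by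
  obtain ⟨x, rfl⟩ := mk_surjective q
  simp only [rAct_mk, mul_assoc]

theorem injective_mk_comp_iff {d : ℕ} {g : Fin d → Γ} :
    Function.Injective (fun i => mk Λ (g i)) ↔ ∀ i j, i ≠ j → g i * (g j)⁻¹ ∉ Λ := by
  simp only [Function.Injective, mk_eq_mk_iff]
  exact forall₂_congr fun i j => not_imp_not.symm

theorem disjoint_range_mk_comp_iff {d : ℕ} {g h : Fin d → Γ} :
    Disjoint (range fun i => mk Λ (g i)) (range fun j => mk Λ (h j)) ↔
      ∀ i j, g i * (h j)⁻¹ ∉ Λ := by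
  simp only [disjoint_range_iff, ne_eq, mk_eq_mk_iff]

end rQuot

namespace Subgroup

variable {Γ : Type*} [Group Γ]

def CosetsDistinct (Λ : Subgroup Γ) {d : ℕ} (g h : Fin d → Γ) : Prop :=
  (∀ i j, i ≠ j → g i * (g j)⁻¹ ∉ Λ) ∧ (∀ i j, i ≠ j → h i * (h j)⁻¹ ∉ Λ) ∧
    ∀ i j, g i * (h j)⁻¹ ∉ Λ

def MapsCosets (Λ : Subgroup Γ) {d : ℕ} (g h : Fin d → Γ) : Prop :=
  ∃ γ : Γ, ∀ i, g i * γ * (h i)⁻¹ ∈ Λ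

theorem mapsCosets_fin_zero (Λ : Subgroup Γ) (g h : Fin 0 → Γ) : Λ.MapsCosets g h :=
  ⟨1, finZeroElim⟩

theorem htcoset_of_forall_disjoint {Λ : Subgroup Γ} [Infinite (rQuot Λ)]
    (H : ∀ d (x y : Fin d → rQuot Λ), Function.Injective x → Function.Injective y →
      Disjoint (range x) (range y) → ∃ γ : Γ, ∀ i, rAct Λ γ (x i) = y i) :
    HTcoset Λ := by
  intro d _ x y hx hy
  obtain ⟨z, hz, hzxy⟩ :=
    ((finite_range x).union (finite_range y)).exists_injective_disjoint_range d
  rw [disjoint_union_right] at hzxy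
  obtain ⟨γ₁, hγ₁⟩ := H d x z hx hz hzxy.1.symm
  obtain ⟨γ₂, hγ₂⟩ := H d z y hz hy hzxy.2
  exact ⟨γ₁ * γ₂, fun i => by rw [rQuot.rAct_mul, hγ₁, hγ₂]⟩

theorem htcoset_iff {Λ : Subgroup Γ} [Infinite (rQuot Λ)] :
    HTcoset Λ ↔ ∀ d (g h : Fin d → Γ), Λ.CosetsDistinct g h → Λ.MapsCosets g h := by
  constructor
  · rintro hht d g h ⟨hg, hh, -⟩
    rcases d.eq_zero_or_pos with rfl | hd
    · exact Λ.mapsCosets_fin_zero g h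
    obtain ⟨γ, hγ⟩ := hht d hd _ _ (rQuot.injective_mk_comp_iff.2 hg)
      (rQuot.injective_mk_comp_iff.2 hh)
    exact ⟨γ, fun i => rQuot.rAct_mk_eq_mk_iff.1 (hγ i)⟩
  · refine fun H => htcoset_of_forall_disjoint fun d x y hx hy hxy => ?_
    obtain ⟨g, rfl⟩ := rQuot.mk_surjective.comp_left x
    obtain ⟨h, rfl⟩ := rQuot.mk_surjective.comp_left y
    obtain ⟨γ, hγ⟩ := H d g h ⟨rQuot.injective_mk_comp_iff.1 hx,
      rQuot.injective_mk_comp_iff.1 hy, rQuot.disjoint_range_mk_comp_iff.1 hxy⟩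
    exact ⟨γ, fun i => rQuot.rAct_mk_eq_mk_iff.2 (hγ i)⟩

theorem isClopen_setOf_pairwise_mul_inv_notMem {d : ℕ} (g : Fin d → Γ) :
    IsClopen {Λ : Subgroup Γ | ∀ i j, i ≠ j → g i * (g j)⁻¹ ∉ Λ} := by
  simp only [ofPred_forall]
  exact isClopen_iInter_of_finite fun i => isClopen_iInter_of_finite fun j =>
    isClopen_iInter_of_finite fun _ => (Chabauty.isClopen_setOf_mem _).compl

theorem isClopen_setOf_cosetsDistinct {d : ℕ} (g h : Fin d → Γ) :
    IsClopen {Λ : Subgroup Γ | Λ.CosetsDistinct g h} := by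
  simp only [CosetsDistinct, ofPred_and]
  refine (isClopen_setOf_pairwise_mul_inv_notMem g).inter
    ((isClopen_setOf_pairwise_mul_inv_notMem h).inter ?_)
  simp only [ofPred_forall]
  exact isClopen_iInter_of_finite fun i => isClopen_iInter_of_finite fun j =>
    (Chabauty.isClopen_setOf_mem _).compl

theorem isOpen_setOf_mapsCosets {d : ℕ} (g h : Fin d → Γ) :
    IsOpen {Λ : Subgroup Γ | Λ.MapsCosets g h} := by
  simp only [MapsCosets, ofPred_exists, ofPred_forall]
  exact isOpen_iUnion fun γ =>
    isOpen_iInter_of_finite fun i => (Chabauty.isClopen_setOf_mem _).isOpen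

theorem isOpen_setOf_cosetsDistinct_imp_mapsCosets {d : ℕ} (g h : Fin d → Γ) :
    IsOpen {Λ : Subgroup Γ | Λ.CosetsDistinct g h → Λ.MapsCosets g h} := by
  simp only [imp_iff_not_or, ofPred_or]
  exact (isClopen_setOf_cosetsDistinct g h).compl.isOpen.union (isOpen_setOf_mapsCosets g h)

theorem isGδ_setOf_infinite_rQuot : IsGδ {Λ : Subgroup Γ | Infinite (rQuot Λ)} := by
  have : {Λ : Subgroup Γ | Infinite (rQuot Λ)} =
      ⋂ n, ⋃ g : Fin n → Γ, {Λ | ∀ i j, i ≠ j → g i * (g j)⁻¹ ∉ Λ} := by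
    ext Λ
    simp only [mem_ofPred_eq, mem_iInter, mem_iUnion, infinite_iff_forall_exists_injective_fin,
      ← rQuot.injective_mk_comp_iff, rQuot.mk_surjective.comp_left.exists]
    rfl
  rw [this]
  exact .iInter fun n =>
    (isOpen_iUnion fun g => (isClopen_setOf_pairwise_mul_inv_notMem g).isOpen).isGδ

end Subgroup

namespace HTset

variable {Γ : Type*} [Group Γ] {P : Set (Subgroup Γ)}

theorem exists_mapsCosets_of_subset_closure (hdense : P ⊆ closure (HTset Γ ∩ P))
    {Λ : Subgroup Γ} (hΛ : Λ ∈ P) {d : ℕ} {g h : Fin d → Γ} (hs : Λ.CosetsDistinct g h)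
    {V : Set (Subgroup Γ)} (hV : V ∈ 𝓝 Λ) : ∃ Λ' ∈ P ∩ V, Λ'.MapsCosets g h := by
  have hnhds :=
    Filter.inter_mem ((Subgroup.isClopen_setOf_cosetsDistinct g h).isOpen.mem_nhds hs) hV
  obtain ⟨Λ', ⟨hs', hΛ'V⟩, ⟨_, hht⟩, hΛ'P⟩ := mem_closure_iff_nhds.1 (hdense hΛ) _ hnhds
  exact ⟨Λ', ⟨hΛ'P, hΛ'V⟩, Subgroup.htcoset_iff.1 hht d g h hs'⟩

theorem subset_closure_inter_of_exists_mapsCosets [Countable Γ] (hP : IsGδ P)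
    (hPinf : ∀ Λ ∈ P, Infinite (rQuot Λ))
    (H : ∀ Λ ∈ P, ∀ d, 1 ≤ d → ∀ g h : Fin d → Γ, Λ.CosetsDistinct g h →
      ∀ V ∈ 𝓝 Λ, ∃ Λ' ∈ P ∩ V, Λ'.MapsCosets g h) :
    P ⊆ closure (HTset Γ ∩ P) := by
  let U : (Σ d, (Fin d → Γ) × (Fin d → Γ)) → Set (Subgroup Γ) := fun p =>
    {Λ | Λ.CosetsDistinct p.2.1 p.2.2 → Λ.MapsCosets p.2.1 p.2.2}
  have hUdense : ∀ p, P ⊆ closure (U p ∩ P) := by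
    rintro ⟨d, g, h⟩ Λ hΛ
    refine mem_closure_iff_nhds.2 fun V hV => ?_
    by_cases hs : Λ.CosetsDistinct g h
    · rcases d.eq_zero_or_pos with rfl | hd
      · exact ⟨Λ, mem_of_mem_nhds hV, fun _ => Λ.mapsCosets_fin_zero g h, hΛ⟩
      obtain ⟨Λ', ⟨hΛ'P, hΛ'V⟩, hmaps⟩ := H Λ hΛ d hd g h hs V hV
      exact ⟨Λ', hΛ'V, fun _ => hmaps, hΛ'P⟩
    · exact ⟨Λ, mem_of_mem_nhds hV, fun hs' => absurd hs' hs, hΛ⟩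
  refine (hP.subset_closure_iInter_inter
    (fun _ => Subgroup.isOpen_setOf_cosetsDistinct_imp_mapsCosets _ _) hUdense).trans
    (closure_mono ?_)
  rintro Λ ⟨hU, hΛP⟩
  have := hPinf Λ hΛP
  exact ⟨⟨this, Subgroup.htcoset_iff.2 fun d g h => mem_iInter.1 hU ⟨d, g, h⟩⟩, hΛP⟩

end HTset

/-- Lemma "HT and Baire": for a countable group `Γ` and a `Gδ` subset `P` of
`Sub_[∞](Γ)` (a `Gδ` subset of the subspace of infinite index subgroups),
`HT(Γ) ∩ P` is dense in `P` if and only if Condition (*) holds. -/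
theorem HTset_dense_iff (Γ : Type*) [Group Γ] [Countable Γ] (P : Set (Subgroup Γ))
    (hPGδ : ∃ T : Set (Subgroup Γ), IsGδ T ∧
      P = T ∩ {Λ : Subgroup Γ | Infinite (rQuot Λ)}) :
    P ⊆ closure (HTset Γ ∩ P) ↔
      ∀ Λ ∈ P, ∀ d : ℕ, 1 ≤ d → ∀ g h : Fin d → Γ,
        (∀ i j, i ≠ j → g i * (g j)⁻¹ ∉ Λ) →
        (∀ i j, i ≠ j → h i * (h j)⁻¹ ∉ Λ) →
        (∀ i j, g i * (h j)⁻¹ ∉ Λ) →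
        ∀ V ∈ nhds Λ, ∃ Λ' ∈ P ∩ V, ∃ γ : Γ, ∀ i, g i * γ * (h i)⁻¹ ∈ Λ' := by
  obtain ⟨T, hT, rfl⟩ := hPGδ
  refine ⟨fun hdense Λ hΛ d _ g h hg hh hgh V hV =>
    HTset.exists_mapsCosets_of_subset_closure hdense hΛ ⟨hg, hh, hgh⟩ hV, fun H => ?_⟩
  exact HTset.subset_closure_inter_of_exists_mapsCosets
    (hT.inter Subgroup.isGδ_setOf_infinite_rQuot) (fun Λ hΛ => hΛ.2)
    fun Λ hΛ d hd g h hs => H Λ hΛ d hd g h hs.1 hs.2.1 hs.2.2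
end

section
/- Let m, n be nonzero integers and let q ≥ 1 be a finite integer. Let X be a set with a transitive action of BS(m,n) such that for every x ∈ X the orbit of x under ⟨b⟩ is finite and the (m,n)-phenotype of its cardinality equals q. Set r := q / gcd(q, |m|). Then the 'reduced b-orbit relation' R on X, defined by: x R y if and only if y lies in the orbit of x under b^{k/r}, where k is the cardinality of the ⟨b⟩-orbit of x (note r divides k since q divides k), is invariant under the action of BS(m,n): for all γ ∈ BS(m,n), x R y implies (x·γ) R (y·γ). -/
/-- The single Baumslag–Solitar relator `t b^m t⁻¹ b^{-n}` in the free group on two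
generators (`false ↦ b`, `true ↦ t`). -/
def BSrel (m n : ℤ) : Set (FreeGroup Bool) :=
  {FreeGroup.of true * FreeGroup.of false ^ m * (FreeGroup.of true)⁻¹ *
    (FreeGroup.of false ^ n)⁻¹}

/-- The Baumslag–Solitar group `BS(m,n) = ⟨b, t ∣ t b^m t⁻¹ = b^n⟩`. -/
abbrev BS (m n : ℤ) : Type := PresentedGroup (BSrel m n)

/-- The generator `b` of `BS(m,n)`. -/
def bGen (m n : ℤ) : BS m n := PresentedGroup.of false

/-- The generator `t` of `BS(m,n)`. -/
def tGen (m n : ℤ) : BS m n := PresentedGroup.of true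

/-- The `(m,n)`-phenotype of a positive integer `L`: the product over all primes `p`
with `v_p(m) = v_p(n) < v_p(L)` of `p^{v_p(L)}` (valuations taken on absolute values). -/
def Phe (m n : ℤ) (L : ℕ) : ℕ :=
  L.factorization.prod fun p e =>
    if m.natAbs.factorization p = n.natAbs.factorization p ∧ n.natAbs.factorization p < e
    then p ^ e else 1

/-- The orbit of a point `x` under the cyclic subgroup `⟨b⟩` of `BS(m,n)`. -/
def bOrbit (m n : ℤ) {X : Type*} [MulAction (BS m n) X] (x : X) : Set X :=
  {y | ∃ k : ℤ, bGen m n ^ k • x = y}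

/-- The reduced `b`-orbit relation: `x R y` iff `y` lies in the orbit of `x` under
`b^{k/r}`, where `k` is the cardinality of the `⟨b⟩`-orbit of `x` and
`r = q / gcd(q, |m|)` is the reduced phenotype. -/
def reducedRel (m n : ℤ) (q : ℕ) {X : Type*} [MulAction (BS m n) X] (x y : X) : Prop :=
  ∃ j : ℤ,
    (bGen m n ^ ((bOrbit m n x).ncard / (q / Nat.gcd q m.natAbs))) ^ j • x = y


/-!
Every generator `γ ∈ {b^{±1}, t^{±1}}` satisfies `γ b^{u i} = b^{v i} γ` for all `i`, with
`|u| ∈ {|m|, |n|}`. Let `k`, `k'` be the periods of `b` at `x` and `γ x`, and `R = q / gcd(q, |m|)`.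
Since `q` is the phenotype of both `k` and `k'`, a prime-by-prime count gives `R ∣ k'` and
`gcd(u, k) · R ∣ k`. By Bézout, a step `b^{(k/R) j}` from `x` therefore equals a step `b^{u s}`,
which `γ` carries to the step `b^{v s}` from `γ x`. As `b^{u s R}` fixes `x`, `b^{v s R}` fixes
`γ x`, so `k' ∣ v s R`, i.e. `k'/R ∣ v s`.
-/

open MulAction

lemma zpow_smul_eq_zpow_smul_iff {G α : Type*} [Group G] [MulAction G α] {g : G} {x : α}
    {a b : ℤ} : g ^ a • x = g ^ b • x ↔ (period g x : ℤ) ∣ a - b := by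
  rw [← zpow_smul_eq_iff_period_dvd, sub_eq_neg_add, zpow_add, mul_smul, zpow_neg,
    inv_smul_eq_iff]

lemma exists_zpow_smul_smul_of_conj {G α : Type*} [Group G] [MulAction G α] {g γ : G} {u v : ℤ}
    (hγ : ∀ i : ℤ, γ * g ^ (u * i) = g ^ (v * i) * γ) {x y : α} {N N' R : ℕ} (hR : R ≠ 0)
    (hN : period g x = N * R) (hN' : period g (γ • x) = N' * R)
    (hgcd : u.natAbs.gcd (period g x) ∣ N) (h : ∃ j : ℤ, (g ^ N) ^ j • x = y) :
    ∃ j : ℤ, (g ^ N') ^ j • γ • x = γ • y := by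
  obtain ⟨j, rfl⟩ := h
  have hconj : ∀ (i : ℤ) (z : α), γ • g ^ (u * i) • z = g ^ (v * i) • γ • z := fun i z => by
    rw [← mul_smul, hγ, mul_smul]
  obtain ⟨s, hs⟩ : ∃ s : ℤ, (period g x : ℤ) ∣ N * j - u * s := by
    obtain ⟨e, he⟩ := Int.natCast_dvd_natCast.2 hgcd |>.mul_right j
    refine ⟨Int.gcdA u (period g x) * e, Int.gcdB u (period g x) * e, ?_⟩
    have hbez := Int.gcd_eq_gcd_ab u (period g x)
    simp only [Int.gcd, Int.natAbs_natCast] at hbez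
    rw [he, hbez]
    ring
  have hfix : g ^ (u * (s * R)) • x = x := by
    rw [zpow_smul_eq_iff_period_dvd]
    obtain ⟨c, hc⟩ := hs
    exact ⟨j - c * R, by rw [hN] at hc ⊢; push_cast at hc ⊢; linear_combination -R * hc⟩
  obtain ⟨c, hc⟩ : (N' : ℤ) ∣ v * s := by
    have := zpow_smul_eq_iff_period_dvd.1 (hconj (s * R) x ▸ congrArg (γ • ·) hfix)
    rw [hN', Nat.cast_mul, ← mul_assoc] at this
    exact Int.dvd_of_mul_dvd_mul_right (by exact_mod_cast hR) this
  refine ⟨c, ?_⟩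
  rw [← zpow_natCast, ← zpow_mul, ← hc, ← hconj, ← zpow_natCast, ← zpow_mul,
    zpow_smul_eq_zpow_smul_iff.2 hs]

abbrev PheSupport (m n : ℤ) (L p : ℕ) : Prop :=
  m.natAbs.factorization p = n.natAbs.factorization p ∧ n.natAbs.factorization p < L.factorization p

lemma Phe_eq_prod_filter (m n : ℤ) (L : ℕ) :
    Phe m n L = (L.factorization.filter (PheSupport m n L)).prod (· ^ ·) := by
  classical
  rw [Finsupp.prod_filter_index, Phe, Finsupp.prod, Finsupp.support_filter, Finset.prod_filter]

lemma filter_PheSupport_le (m n : ℤ) (L : ℕ) :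
    L.factorization.filter (PheSupport m n L) ≤ L.factorization := fun p => by
  rw [Finsupp.filter_apply]
  split_ifs <;> simp

lemma factorization_Phe (m n : ℤ) (L : ℕ) :
    (Phe m n L).factorization = L.factorization.filter (PheSupport m n L) := by
  rw [Phe_eq_prod_filter]
  exact Nat.factorization_prod_pow_eq_self_of_le_factorization (filter_PheSupport_le m n L)

lemma Phe_dvd (m n : ℤ) (L : ℕ) : Phe m n L ∣ L := by
  rw [Phe_eq_prod_filter]
  exact Nat.prod_pow_dvd_of_le_factorization (filter_PheSupport_le m n L)

lemma Phe_pos (m n : ℤ) (L : ℕ) : 0 < Phe m n L := by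
  rcases eq_or_ne L 0 with rfl | hL
  · simp [Phe]
  · exact Nat.pos_of_dvd_of_pos (Phe_dvd m n L) (Nat.pos_of_ne_zero hL)

lemma Phe_div_gcd_mul_gcd_dvd {m n : ℤ} (hm : m ≠ 0) (hn : n ≠ 0) {U : ℕ}
    (hU : U = m.natAbs ∨ U = n.natAbs) (L : ℕ) :
    Phe m n L / (Phe m n L).gcd m.natAbs * U.gcd L ∣ L := by
  rcases eq_or_ne L 0 with rfl | hL
  · exact dvd_zero _
  have hq := (Phe_pos m n L).ne'
  have hU0 : U ≠ 0 := by rcases hU with rfl | rfl <;> simpa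
  have hR : Phe m n L / (Phe m n L).gcd m.natAbs ≠ 0 :=
    (Nat.div_gcd_pos_of_pos_left _ (Phe_pos m n L)).ne'
  rw [← Nat.factorization_le_iff_dvd (mul_ne_zero hR (Nat.gcd_ne_zero_right hL)) hL]
  intro p
  rw [Nat.factorization_mul hR (Nat.gcd_ne_zero_right hL), Finsupp.add_apply,
    Nat.factorization_div (Nat.gcd_dvd_left _ _), Finsupp.tsub_apply,
    Nat.factorization_gcd hU0 hL, Nat.factorization_gcd hq (Int.natAbs_ne_zero.2 hm),
    Finsupp.inf_apply, Finsupp.inf_apply, factorization_Phe, Finsupp.filter_apply]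
  split_ifs with h
  · rcases hU with rfl | rfl <;> omega
  · omega

lemma tGen_mul_bGen_zpow_mul_inv (m n : ℤ) :
    tGen m n * bGen m n ^ m * (tGen m n)⁻¹ = bGen m n ^ n :=
  mul_inv_eq_one.mp (PresentedGroup.one_of_mem (rels := BSrel m n) rfl)

lemma tGen_mul_bGen_zpow (m n i : ℤ) :
    tGen m n * bGen m n ^ (m * i) = bGen m n ^ (n * i) * tGen m n := by
  rw [zpow_mul, zpow_mul, ← tGen_mul_bGen_zpow_mul_inv, conj_zpow, inv_mul_cancel_right]

lemma inv_tGen_mul_bGen_zpow (m n i : ℤ) :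
    (tGen m n)⁻¹ * bGen m n ^ (n * i) = bGen m n ^ (m * i) * (tGen m n)⁻¹ := by
  rw [inv_mul_eq_iff_eq_mul, ← mul_assoc, tGen_mul_bGen_zpow, mul_inv_cancel_right]

-- Both sides are `0` when the orbit is infinite.
lemma ncard_bOrbit_eq_period {m n : ℤ} {X : Type*} [MulAction (BS m n) X] (x : X) :
    (bOrbit m n x).ncard = period (bGen m n) x := by
  have : bOrbit m n x = orbit (Subgroup.zpowers (bGen m n)) x := by
    ext y
    exact ⟨fun ⟨k, hk⟩ => ⟨⟨_, k, rfl⟩, hk⟩, fun ⟨⟨_, k, rfl⟩, h⟩ => ⟨k, h⟩⟩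
  rw [this, ← Nat.card_coe_set_eq, Nat.card_congr (orbitZPowersEquiv _ x), Nat.card_zmod]
  rfl

lemma reducedRel_smul_of_conj {m n : ℤ} (hm : m ≠ 0) (hn : n ≠ 0) {q : ℕ} {X : Type*}
    [MulAction (BS m n) X] (hPhe : ∀ x : X, Phe m n (bOrbit m n x).ncard = q)
    {γ : BS m n} {u v : ℤ} (hu : u.natAbs = m.natAbs ∨ u.natAbs = n.natAbs)
    (hγ : ∀ i : ℤ, γ * bGen m n ^ (u * i) = bGen m n ^ (v * i) * γ) {x y : X}
    (h : reducedRel m n q x y) : reducedRel m n q (γ • x) (γ • y) := by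
  simp only [reducedRel, ncard_bOrbit_eq_period] at h ⊢
  simp only [ncard_bOrbit_eq_period] at hPhe
  have hR : q / q.gcd m.natAbs ≠ 0 := (Nat.div_gcd_pos_of_pos_left _ (hPhe x ▸ Phe_pos ..)).ne'
  have hR_dvd (z : X) : q / q.gcd m.natAbs ∣ period (bGen m n) z :=
    (Nat.div_dvd_of_dvd (Nat.gcd_dvd_left _ _)).trans (hPhe z ▸ Phe_dvd ..)
  refine exists_zpow_smul_smul_of_conj hγ hR (Nat.div_mul_cancel (hR_dvd x)).symm
    (Nat.div_mul_cancel (hR_dvd _)).symm (Nat.dvd_div_of_mul_dvd ?_) h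
  exact hPhe x ▸ Phe_div_gcd_mul_gcd_dvd hm hn hu _

theorem reducedRel_invariant_general (m n : ℤ) (hm : m ≠ 0) (hn : n ≠ 0)
    (q : ℕ) (X : Type*) [MulAction (BS m n) X]
    (horb : ∀ x : X, (bOrbit m n x).Finite ∧ Phe m n (bOrbit m n x).ncard = q) :
    ∀ (γ : BS m n) (x y : X),
      reducedRel m n q x y → reducedRel m n q (γ • x) (γ • y) := by
  have hPhe x := (horb x).2
  intro γ
  have hγ : γ ∈ Subgroup.closure (Set.range PresentedGroup.of) := by
    rw [PresentedGroup.closure_range_of]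
    exact Subgroup.mem_top γ
  induction hγ using Subgroup.closure_induction'' with
  | mem γ hγ =>
    obtain ⟨_ | _, rfl⟩ := hγ
    · exact fun _ _ => reducedRel_smul_of_conj hm hn hPhe (.inl rfl) (v := m)
        fun i => (Commute.self_zpow (bGen m n) _).eq
    · exact fun _ _ => reducedRel_smul_of_conj hm hn hPhe (.inl rfl) (tGen_mul_bGen_zpow m n)
  | inv_mem γ hγ =>
    obtain ⟨_ | _, rfl⟩ := hγ
    · exact fun _ _ => reducedRel_smul_of_conj hm hn hPhe (.inl rfl) (v := m)
        fun i => (Commute.self_zpow (bGen m n) _).inv_left.eq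
    · exact fun _ _ => reducedRel_smul_of_conj hm hn hPhe (.inr rfl) (inv_tGen_mul_bGen_zpow m n)
  | one => simp
  | mul γ δ _ _ hγ hδ => exact fun x y h => by simpa only [mul_smul] using hγ _ _ (hδ _ _ h)

/-- For a transitive `BS(m,n)`-action with all `⟨b⟩`-orbits finite of phenotype `q`,
the reduced `b`-orbit relation is invariant under the action. -/
theorem reducedRel_invariant (m n : ℤ) (hm : m ≠ 0) (hn : n ≠ 0)
    (q : ℕ) (hq : 1 ≤ q) (X : Type*) [MulAction (BS m n) X]
    (htrans : ∀ x y : X, ∃ γ : BS m n, γ • x = y)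
    (horb : ∀ x : X, (bOrbit m n x).Finite ∧ Phe m n (bOrbit m n x).ncard = q) :
    ∀ (γ : BS m n) (x y : X),
      reducedRel m n q x y → reducedRel m n q (γ • x) (γ • y) :=
  reducedRel_invariant_general m n hm hn q X horb
end
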